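/- Let A ∈ ℝ^{n×n}, B ∈ ℝ^{n×p}, F ∈ ℝ^{r×n} with rank(F) = r, t₁ > 0, let 𝒞 be the controllability matrix of (A, B) and W_c(t₁) the controllability Gramian. Then rank(F·𝒞) = r if and only if the r×r matrix F·W_c(t₁)·Fᵀ is invertible; i.e., the output controllability rank condition is necessary and sufficient for nonsingularity of the target-control Gramian. -/

import Mathlib

open Matrix intervalIntegral
/-- Controllability matrix of the pair `(A, B)`: the horizontal block concatenation of
`B, A*B, A²*B, …, A^(n-1)*B`, indexed so that entry `(i, (k, j))` is `(A^k * B) i j`. -/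
noncomputable def ctrbMat {n p : ℕ} (A : Matrix (Fin n) (Fin n) ℝ)
    (B : Matrix (Fin n) (Fin p) ℝ) : Matrix (Fin n) (Fin n × Fin p) ℝ :=
  fun i kj => (A ^ (kj.1 : ℕ) * B) i kj.2

/-- Controllability Gramian `W_c(t₁) = ∫₀^{t₁} exp(As) B Bᵀ exp(Aᵀs) ds` (entrywise integral). -/
noncomputable def ctrbGram {n p : ℕ} (A : Matrix (Fin n) (Fin n) ℝ)
    (B : Matrix (Fin n) (Fin p) ℝ) (t₁ : ℝ) : Matrix (Fin n) (Fin n) ℝ :=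
  fun i j => ∫ s in (0:ℝ)..t₁,
    (NormedSpace.exp (s • A) * B * Bᵀ * NormedSpace.exp (s • Aᵀ)) i j

/-!
A row vector `y` lies in the left kernel of `F W_c(t₁) Fᵀ` iff it lies in that of `F 𝒞`, and
each of the two conditions in the theorem says exactly that this left kernel is trivial. With
`N(s) = F exp(sA) B` one has `F W_c(t₁) Fᵀ = ∫₀^{t₁} N Nᵀ`, so
`y F W_c(t₁) Fᵀ yᵀ = ∫₀^{t₁} ‖y N(s)‖²`, and `y` is in the left kernel iff `y N(s) = 0` on
`[0, t₁]`. Differentiating repeatedly at `s = 0`, and conversely summing the exponential series,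
this is equivalent to `y F Aᵏ B = 0` for all `k`; by Cayley–Hamilton the powers `k < n` suffice,
which is `y F 𝒞 = 0`.
-/

open Set NormedSpace MeasureTheory

section BanachAlgebra

variable {𝔸 E : Type*} [NormedRing 𝔸] [NormedAlgebra ℝ 𝔸] [CompleteSpace 𝔸]
  [NormedAddCommGroup E] [NormedSpace ℝ E]

theorem ContinuousLinearMap.map_exp_smul_eq_zero_of_map_pow_eq_zero (L : 𝔸 →L[ℝ] E) {a : 𝔸}
    (h : ∀ k : ℕ, L (a ^ k) = 0) (s : ℝ) : L (exp (s • a)) = 0 := by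
  have hsum := (exp_series_hasSum_exp' (𝕂 := ℝ) (s • a)).mapL L
  simp only [smul_pow, map_smul, h, smul_zero] at hsum
  exact hsum.unique hasSum_zero

theorem ContinuousLinearMap.map_mul_exp_smul_eq_zero {L : 𝔸 →L[ℝ] E} {a : 𝔸} {U : Set ℝ}
    (hU : IsOpen U) (h : ∀ s ∈ U, L (exp (s • a)) = 0) {s : ℝ} (hs : s ∈ U) :
    L (a * exp (s • a)) = 0 := by
  have hderiv := L.hasFDerivAt.comp_hasDerivAt s (hasDerivAt_exp_smul_const' a s)
  have hzero : (fun u : ℝ => L (exp (u • a))) =ᶠ[nhds s] fun _ => 0 :=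
    Filter.eventuallyEq_of_mem (hU.mem_nhds hs) h
  simpa using hderiv.deriv.symm.trans hzero.deriv_eq

theorem ContinuousLinearMap.map_pow_eq_zero_of_map_exp_smul_eq_zero {L : 𝔸 →L[ℝ] E} {a : 𝔸}
    {t : ℝ} (ht : 0 < t) (h : ∀ s ∈ Ioo 0 t, L (exp (s • a)) = 0) (k : ℕ) : L (a ^ k) = 0 := by
  have hk : ∀ s ∈ Ioo 0 t, L (a ^ k * exp (s • a)) = 0 := by
    induction k with
    | zero => simpa using h
    | succ k ih =>
      intro s hs
      simpa [pow_succ, mul_assoc] using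
        (L.comp (ContinuousLinearMap.mul ℝ 𝔸 (a ^ k))).map_mul_exp_smul_eq_zero isOpen_Ioo ih hs
  have hcont : Continuous fun s : ℝ => L (a ^ k * exp (s • a)) :=
    L.continuous.comp (continuous_const.mul (differentiable_exp_smul_const ℝ a).continuous)
  have h0 : (0 : ℝ) ∈ closure (Ioo 0 t) := by simp [closure_Ioo ht.ne, ht.le]
  simpa using (EqOn.closure hk hcont continuous_const) h0

end BanachAlgebra

theorem Matrix.pow_mem_span_pow_lt_card {R n : Type*} [CommRing R] [Nontrivial R] [Fintype n]
    [DecidableEq n] (A : Matrix n n R) (k : ℕ) :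
    A ^ k ∈ Submodule.span R ((A ^ ·) '' Iio (Fintype.card n)) := by
  rw [pow_eq_aeval_mod_charpoly, Polynomial.aeval_eq_sum_range]
  refine Submodule.sum_mem _ fun i _ => ?_
  by_cases hi : i < Fintype.card n
  · exact Submodule.smul_mem _ _ (Submodule.subset_span ⟨i, hi, rfl⟩)
  · have hdeg := (Polynomial.degree_modByMonic_lt (Polynomial.X ^ k) A.charpoly_monic).trans_le
      (A.charpoly_degree_eq_dim.trans_le (WithBot.coe_le_coe.mpr (not_lt.mp hi)))
    rw [Polynomial.coeff_eq_zero_of_degree_lt hdeg, zero_smul]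
    exact zero_mem _

theorem Matrix.rank_eq_card_iff_vecMul_injective {K m n : Type*} [Field K] [Fintype m] [Fintype n]
    (M : Matrix m n K) : M.rank = Fintype.card m ↔ Function.Injective M.vecMul := by
  rw [vecMul_injective_iff, linearIndependent_iff_card_eq_finrank_span, rank_eq_finrank_span_row,
    Set.finrank, eq_comm]

section MatrixExp

open scoped Matrix.Norms.Operator

variable {n ι : Type*} [Fintype n] [DecidableEq n] [Fintype ι]

theorem Matrix.vecMul_exp_smul_mul_eq_zero_iff {t : ℝ} (ht : 0 < t)
    (A : Matrix n n ℝ) (B : Matrix n ι ℝ) (u : n → ℝ) :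
    (∀ s ∈ Icc 0 t, u ᵥ* (exp (s • A) * B) = 0) ↔
      ∀ k < Fintype.card n, u ᵥ* (A ^ k * B) = 0 := by
  let L : Matrix n n ℝ →ₗ[ℝ] ι → ℝ := vecMulBilin ℝ ℝ u ∘ₗ mulRightLinearMap n ℝ B
  change (∀ s ∈ Icc 0 t, L (exp (s • A)) = 0) ↔ ∀ k < Fintype.card n, L (A ^ k) = 0
  constructor
  · intro h k _
    exact L.toContinuousLinearMap.map_pow_eq_zero_of_map_exp_smul_eq_zero ht
      (fun s hs => h s (Ioo_subset_Icc_self hs)) k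
  · intro h s _
    refine L.toContinuousLinearMap.map_exp_smul_eq_zero_of_map_pow_eq_zero (fun k => ?_) s
    have hspan : Submodule.span ℝ ((A ^ ·) '' Iio (Fintype.card n)) ≤ LinearMap.ker L :=
      Submodule.span_le.mpr (by rintro _ ⟨i, hi, rfl⟩; exact h i hi)
    exact hspan (A.pow_mem_span_pow_lt_card k)

theorem Matrix.continuous_exp_smul (A : Matrix n n ℝ) : Continuous fun s : ℝ => exp (s • A) :=
  (differentiable_exp_smul_const ℝ A).continuous

end MatrixExp

section EntrywiseIntegral

variable {m n ι : Type*} [Fintype m] [Fintype n] [Fintype ι]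

/-- Mathlib puts no global norm on matrices, so matrix-valued integrals are taken entrywise, as
in `ctrbGram`. -/
noncomputable def Matrix.entrywiseIntegral (f : ℝ → Matrix m n ℝ) (a b : ℝ) : Matrix m n ℝ :=
  fun i j => ∫ s in a..b, f s i j

theorem LinearMap.map_entrywiseIntegral {W : Type*} [NormedAddCommGroup W] [NormedSpace ℝ W]
    [CompleteSpace W] (L : Matrix m n ℝ →ₗ[ℝ] W) {f : ℝ → Matrix m n ℝ} (hf : Continuous f)
    (a b : ℝ) : L (entrywiseIntegral f a b) = ∫ s in a..b, L (f s) := by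
  let g : ℝ → m → n → ℝ := f
  have hg : IntervalIntegrable g volume a b := hf.intervalIntegrable a b
  have hentry : entrywiseIntegral f a b = ∫ s in a..b, g s := by
    funext i j
    let entry : (m → n → ℝ) →L[ℝ] ℝ :=
      (ContinuousLinearMap.proj (R := ℝ) (φ := fun _ : n => ℝ) j).comp
        (ContinuousLinearMap.proj (R := ℝ) (φ := fun _ : m => n → ℝ) i)
    exact entry.intervalIntegral_comp_comm hg
  rw [hentry]
  exact ((L : (m → n → ℝ) →ₗ[ℝ] W).toContinuousLinearMap.intervalIntegral_comp_comm hg).symm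

theorem Matrix.mul_entrywiseIntegral_mul {l o : Type*} [Fintype l] [Fintype o]
    (X : Matrix l m ℝ) (Y : Matrix n o ℝ) {f : ℝ → Matrix m n ℝ} (hf : Continuous f)
    (a b : ℝ) :
    X * entrywiseIntegral f a b * Y = entrywiseIntegral (fun s => X * f s * Y) a b := by
  ext i j
  exact (entryLinearMap ℝ ℝ i j ∘ₗ mulRightLinearMap l ℝ Y ∘ₗ mulLeftLinearMap n ℝ X)
    |>.map_entrywiseIntegral hf a b

theorem Matrix.vecMul_entrywiseIntegral_mul_transpose_eq_zero_iff {N : ℝ → Matrix m ι ℝ}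
    (hN : Continuous N) {a b : ℝ} (hab : a < b) (y : m → ℝ) :
    y ᵥ* entrywiseIntegral (fun s => N s * (N s)ᵀ) a b = 0 ↔ ∀ s ∈ Icc a b, y ᵥ* N s = 0 := by
  have hNN : Continuous fun s => N s * (N s)ᵀ := hN.matrix_mul hN.matrix_transpose
  have hquad : (y ᵥ* entrywiseIntegral (fun s => N s * (N s)ᵀ) a b) ⬝ᵥ y =
      ∫ s in a..b, (y ᵥ* N s) ⬝ᵥ (y ᵥ* N s) := by
    refine (((dotProductBilin ℝ ℝ).flip y ∘ₗ vecMulBilin ℝ ℝ y).map_entrywiseIntegral hNN a b).trans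
      (integral_congr fun s _ => ?_)
    simp [← vecMul_vecMul, ← dotProduct_mulVec, mulVec_transpose]
  constructor
  · intro h s hs
    by_contra hne
    have hcont : Continuous fun s => (y ᵥ* N s) ⬝ᵥ (y ᵥ* N s) := by fun_prop
    have hpos := integral_lt_integral_of_continuousOn_of_le_of_exists_lt hab
      continuousOn_const hcont.continuousOn (fun _ _ => dotProduct_self_star_nonneg _)
      ⟨s, hs, (dotProduct_self_star_nonneg _).lt_of_ne' (dotProduct_self_eq_zero.not.mpr hne)⟩
    rw [← hquad, h, zero_dotProduct, intervalIntegral.integral_const, smul_zero] at hpos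
    exact hpos.false
  · intro h
    refine ((vecMulBilin ℝ ℝ y).map_entrywiseIntegral hNN a b).trans ?_
    rw [← intervalIntegral.integral_zero]
    refine integral_congr fun s hs => ?_
    rw [uIcc_of_le hab.le] at hs
    simp [← vecMul_vecMul, h s hs]

end EntrywiseIntegral

theorem vecMul_ctrbMat_eq_zero_iff {n p : ℕ} (A : Matrix (Fin n) (Fin n) ℝ)
    (B : Matrix (Fin n) (Fin p) ℝ) (u : Fin n → ℝ) :
    u ᵥ* ctrbMat A B = 0 ↔ ∀ k < n, u ᵥ* (A ^ k * B) = 0 := by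
  constructor
  · intro h k hk
    ext j
    exact congrFun h (⟨k, hk⟩, j)
  · intro h
    ext ⟨k, j⟩
    exact congrFun (h k k.isLt) j

theorem mul_ctrbGram_mul_transpose {m : Type*} [Fintype m] {n p : ℕ}
    (A : Matrix (Fin n) (Fin n) ℝ) (B : Matrix (Fin n) (Fin p) ℝ) (F : Matrix m (Fin n) ℝ)
    (t : ℝ) : F * ctrbGram A B t * Fᵀ =
      entrywiseIntegral (fun s => (F * exp (s • A) * B) * (F * exp (s • A) * B)ᵀ) 0 t := by
  have hE : Continuous fun s : ℝ => exp (s • A) * B * Bᵀ * exp (s • Aᵀ) :=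
    (((continuous_exp_smul A).matrix_mul continuous_const).matrix_mul continuous_const).matrix_mul
      (continuous_exp_smul Aᵀ)
  rw [show ctrbGram A B t = entrywiseIntegral (fun s => exp (s • A) * B * Bᵀ * exp (s • Aᵀ)) 0 t
    from rfl, mul_entrywiseIntegral_mul F Fᵀ hE]
  simp only [Matrix.transpose_mul, ← transpose_smul, exp_transpose, Matrix.mul_assoc]

theorem output_controllability_iff_target_gramian_invertible_general {n p r : ℕ}
    (A : Matrix (Fin n) (Fin n) ℝ) (B : Matrix (Fin n) (Fin p) ℝ)
    (F : Matrix (Fin r) (Fin n) ℝ) (t₁ : ℝ) (ht₁ : 0 < t₁) :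
    (F * ctrbMat A B).rank = r ↔ IsUnit (F * ctrbGram A B t₁ * Fᵀ) := by
  have hN : Continuous fun s : ℝ => F * exp (s • A) * B :=
    (continuous_const.matrix_mul (continuous_exp_smul A)).matrix_mul continuous_const
  have hkernel (y : Fin r → ℝ) :
      y ᵥ* (F * ctrbGram A B t₁ * Fᵀ) = 0 ↔ y ᵥ* (F * ctrbMat A B) = 0 := by
    rw [mul_ctrbGram_mul_transpose, vecMul_entrywiseIntegral_mul_transpose_eq_zero_iff hN ht₁,
      ← vecMul_vecMul, vecMul_ctrbMat_eq_zero_iff]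
    have hexp := vecMul_exp_smul_mul_eq_zero_iff ht₁ A B (y ᵥ* F)
    rw [Fintype.card_fin] at hexp
    simpa only [vecMul_vecMul, Matrix.mul_assoc] using hexp
  have hrank := (F * ctrbMat A B).rank_eq_card_iff_vecMul_injective
  rw [Fintype.card_fin] at hrank
  rw [hrank, ← vecMul_injective_iff_isUnit, ← coe_vecMulLinear, ← coe_vecMulLinear,
    injective_iff_map_eq_zero, injective_iff_map_eq_zero]
  simp only [vecMulLinear_apply, hkernel]

/-- If `rank(F) = r`, the output controllability rank condition `rank(F·𝒞) = r` holds
if and only if the `r × r` target-control Gramian `F · W_c(t₁) · Fᵀ` is invertible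
(for `t₁ > 0`). -/
theorem output_controllability_iff_target_gramian_invertible {n p r : ℕ}
    (A : Matrix (Fin n) (Fin n) ℝ) (B : Matrix (Fin n) (Fin p) ℝ)
    (F : Matrix (Fin r) (Fin n) ℝ) (t₁ : ℝ) (ht₁ : 0 < t₁)
    (hF : F.rank = r) :
    (F * ctrbMat A B).rank = r ↔ IsUnit (F * ctrbGram A B t₁ * Fᵀ) :=
  output_controllability_iff_target_gramian_invertible_general A B F t₁ ht₁
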